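/- Let A = (Σ, Q, δ, I) be a top-down tree automaton and let ≡up(id) := ⊆up(id) ∩ (⊆up(id))⁻¹ be the equivalence induced by the upward trace inclusion induced by the identity relation. Then ≡up(id) is good for quotienting, i.e., L(A/≡up(id)) = L(A). -/

import Mathlib

/-- A tree over a ranked alphabet: a partial map from nodes (lists of child
indices) to symbols, with finite, prefix-closed domain respecting ranks. -/
structure RTree (α : Type) (rank : α → ℕ) where
  label : List ℕ → Option α
  finite : Set.Finite {v : List ℕ | label v ≠ none}
  prefixClosed : ∀ v i, label (v ++ [i]) ≠ none → ∃ a, label v = some a ∧ i < rank a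

namespace RTree

variable {α : Type} {rank : α → ℕ}

/-- A tree is closed if every node has all the children prescribed by the rank
of its symbol. -/
def IsClosed (t : RTree α rank) : Prop :=
  ∀ v a, t.label v = some a → ∀ i, i < rank a → t.label (v ++ [i]) ≠ none

/-- The domain of a run on `t`: the nodes of `t` together with all (possibly
dangling) children of nodes of `t`. -/
def inRunDom (t : RTree α rank) (v : List ℕ) : Prop :=
  t.label v ≠ none ∨ ∃ v' i a, v = v' ++ [i] ∧ t.label v' = some a ∧ i < rank a

/-- A leaf of `t`: a node of `t` with no children in `t`. -/
def IsLeaf (t : RTree α rank) (v : List ℕ) : Prop :=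
  t.label v ≠ none ∧ ∀ i, t.label (v ++ [i]) = none

end RTree

/-- A (nondeterministic, top-down) tree automaton, with a distinguished final
state `top`; leaf rules have right-hand side `[top]`, and rules for symbols of
positive rank have right-hand side of length equal to the rank. -/
structure TDTA (Q α : Type) (rank : α → ℕ) where
  top : Q
  init : Set Q
  delta : Set (Q × α × List Q)
  rank_ok : ∀ τ ∈ delta, (rank τ.2.1 = 0 → τ.2.2 = [top]) ∧
    (0 < rank τ.2.1 → τ.2.2.length = rank τ.2.1)

namespace TDTA

variable {Q α : Type} {rank : α → ℕ}

/-- The right-hand side that a run `π` must match at node `v` labelled `a`. -/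
def rhsOf (A : TDTA Q α rank) (a : α) (π : List ℕ → Q) (v : List ℕ) : List Q :=
  if rank a = 0 then [A.top] else (List.range (rank a)).map fun i => π (v ++ [i])

/-- `π` is a run of `A` on the tree `t`. -/
def IsRun (A : TDTA Q α rank) (t : RTree α rank) (π : List ℕ → Q) : Prop :=
  ∀ v a, t.label v = some a → (π v, a, A.rhsOf a π v) ∈ A.delta

/-- The downward language of a state: closed trees accepted from it. -/
def dlang (A : TDTA Q α rank) (q : Q) : Set (RTree α rank) :=
  {t | t.IsClosed ∧ ∃ π, A.IsRun t π ∧ π [] = q}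

/-- The language of the automaton. -/
def lang (A : TDTA Q α rank) : Set (RTree α rank) :=
  {t | ∃ q ∈ A.init, t ∈ A.dlang q}

/-- Pruning: keep exactly the transitions that are maximal w.r.t. `P`. -/
def prune (A : TDTA Q α rank) (P : Q × α × List Q → Q × α × List Q → Prop) :
    TDTA Q α rank where
  top := A.top
  init := A.init
  delta := {τ | τ ∈ A.delta ∧ ¬∃ τ' ∈ A.delta, P τ τ'}
  rank_ok := fun τ hτ => A.rank_ok τ hτ.1

/-- Downward trace inclusion `q ⊆dw r`. -/
def dwIncl (A : TDTA Q α rank) (q r : Q) : Prop :=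
  ∀ t : RTree α rank, t.IsClosed → ∀ π, A.IsRun t π → π [] = q →
    ∃ π', A.IsRun t π' ∧ π' [] = r

/-- Upward trace inclusion `q ⊆up(R) r` induced by a relation `R`. -/
def upIncl (A : TDTA Q α rank) (R : Q → Q → Prop) (q r : Q) : Prop :=
  (q = A.top → r = A.top) ∧
  ∀ (t : RTree α rank) (v : List ℕ), t.IsLeaf v →
    ∀ πq, A.IsRun t πq → πq v = q →
      ∃ πr, A.IsRun t πr ∧ πr v = r ∧
        (∀ v', v' <+: v → πq v' ∈ A.init → πr v' ∈ A.init) ∧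
        ∀ v' x, v' <+: v → v' ≠ v → t.inRunDom (v' ++ [x]) → ¬(v' ++ [x]) <+: v →
          R (πq (v' ++ [x])) (πr (v' ++ [x]))

/-- `D` is a downward simulation on `A`. -/
def IsDwSim (A : TDTA Q α rank) (D : Q → Q → Prop) : Prop :=
  ∀ q r, D q r → (q = A.top → r = A.top) ∧
    ∀ a qs, (q, a, qs) ∈ A.delta →
      ∃ rs, (r, a, rs) ∈ A.delta ∧ List.Forall₂ D qs rs

/-- The maximal downward simulation `≼dw` (the union of all downward
simulations). -/
def dwSim (A : TDTA Q α rank) (q r : Q) : Prop :=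
  ∃ D, A.IsDwSim D ∧ D q r

/-- `U` is an upward simulation on `A` induced by `R`. -/
def IsUpSim (A : TDTA Q α rank) (R U : Q → Q → Prop) : Prop :=
  ∀ q r, U q r → (q = A.top → r = A.top) ∧ (q ∈ A.init → r ∈ A.init) ∧
    ∀ q' a qs, (q', a, qs) ∈ A.delta → ∀ i : Fin qs.length, qs.get i = q →
      ∃ r' rs, ∃ hlen : rs.length = qs.length, (r', a, rs) ∈ A.delta ∧
        rs.get (Fin.cast hlen.symm i) = r ∧ U q' r' ∧
        ∀ j : Fin qs.length, j ≠ i → R (qs.get j) (rs.get (Fin.cast hlen.symm j))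

/-- The maximal upward simulation `≼up(R)` induced by `R`. -/
def upSim (A : TDTA Q α rank) (R : Q → Q → Prop) (q r : Q) : Prop :=
  ∃ U, A.IsUpSim R U ∧ U q r

/-- `W` is a downup-relation on `A`. -/
def IsDownUp (A : TDTA Q α rank) (W : Q → Q → Prop) : Prop :=
  ∀ p q, W p q → ∀ (t : RTree α rank) (π : List ℕ → Q), A.IsRun t π → π [] = p →
    ∃ π', A.IsRun t π' ∧ π' [] = q ∧ ∀ v, t.inRunDom v → A.upSim W (π v) (π' v)

end TDTA

/-- The strict version `S ∖ S⁻¹` of a relation `S`. -/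
def strictOf {Q : Type} (S : Q → Q → Prop) (q r : Q) : Prop := S q r ∧ ¬S r q

/-- Lifting of relations to tuples: pointwise `Dw` everywhere and `Ds` at some
position. -/
def liftStrict {Q : Type} (Dw Ds : Q → Q → Prop) (qs rs : List Q) : Prop :=
  List.Forall₂ Dw qs rs ∧
    ∃ (i : ℕ) (h : i < qs.length) (h' : i < rs.length), Ds (qs.get ⟨i, h⟩) (rs.get ⟨i, h'⟩)

/-- The pruning relation `P(U, Dl)` comparing transitions with the same symbol:
sources by `U`, target tuples by `Dl`. -/
def pruneRel {Q α : Type} (U : Q → Q → Prop) (Dl : List Q → List Q → Prop) :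
    Q × α × List Q → Q × α × List Q → Prop :=
  fun τ τ' => U τ.1 τ'.1 ∧ τ.2.1 = τ'.2.1 ∧ Dl τ.2.2 τ'.2.2

/-- The quotient automaton `A/≡` w.r.t. a setoid `s` on its states. -/
def TDTA.quotAut {Q α : Type} {rank : α → ℕ} (A : TDTA Q α rank) (s : Setoid Q) :
    TDTA (Quotient s) α rank where
  top := Quotient.mk s A.top
  init := {x | ∃ q ∈ A.init, x = Quotient.mk s q}
  delta := {τ | ∃ q a qs, (q, a, qs) ∈ A.delta ∧
    τ = (Quotient.mk s q, a, qs.map fun p => Quotient.mk s p)}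
  rank_ok := by
    rintro τ ⟨q, a, qs, hmem, rfl⟩
    refine ⟨fun h0 => ?_, fun h0 => ?_⟩
    · have h : qs = [A.top] := (A.rank_ok _ hmem).1 h0
      simp [h]
    · simpa using (A.rank_ok _ hmem).2 h0


/-!
Given an accepting run of `A/≡` on `t`, an accepting run of `A` is built top-down, one node at a
time. The invariant is a run `ρ` of `A` on a prefix-closed part of `t`, initial at the root,
whose states on the frontier are `≡`-equivalent to those of the quotient run. At a frontier node
`v` the quotient run uses a rule `⟨p, a, ps⟩` with `p ≡ ρ v`. Since `ρ v ⊆up(id) p`, the path from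
the root to `v` can be rerouted so that it ends in `p`, keeping the root initial and every state
hanging off the path unchanged; then `v` takes the rule `⟨p, a, ps⟩`. The converse inclusion
`p ⊆up(id) ρ v` is only needed to give `v` some `a`-rule first, so that `v` is a leaf of a run.
-/

namespace RTree

variable {α : Type} {rank : α → ℕ}

theorem label_ne_none_of_prefix (t : RTree α rank) {u v : List ℕ} (huv : u <+: v)
    (hv : t.label v ≠ none) : t.label u ≠ none := by
  obtain ⟨w, rfl⟩ := huv
  induction w using List.reverseRecOn with
  | nil => simpa using hv
  | append_singleton w i ih =>
    rw [← List.append_assoc] at hv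
    obtain ⟨a, ha, -⟩ := t.prefixClosed _ i hv
    exact ih (by simp [ha])

def single (a : α) : RTree α rank where
  label v := if v = [] then some a else none
  finite := (Set.finite_singleton []).subset fun v hv => by
    by_contra h
    exact hv (if_neg h)
  prefixClosed v i h := absurd (if_neg (by simp)) h

theorem isLeaf_single (a : α) : (single (rank := rank) a).IsLeaf [] :=
  ⟨by simp [single], fun i => by simp [single]⟩

open Classical in
noncomputable def restrict (t : RTree α rank) (S : Set (List ℕ)) : RTree α rank where
  label v := if ∀ u, u <+: v → u ∈ S then t.label v else none
  finite := t.finite.subset fun v hv => by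
    intro h
    apply hv
    simp only [h, ite_self]
  prefixClosed v i h := by
    by_cases hc : ∀ u, u <+: v ++ [i] → u ∈ S
    · obtain ⟨a, ha, hi⟩ := t.prefixClosed v i (by simpa only [if_pos hc] using h)
      exact ⟨a, by rw [if_pos fun u hu => hc u (hu.trans (List.prefix_append v [i])), ha], hi⟩
    · exact absurd (if_neg hc) h

variable {t : RTree α rank} {S : Set (List ℕ)} {v : List ℕ}

theorem restrict_label_eq_some {a : α} :
    (t.restrict S).label v = some a ↔ (∀ u, u <+: v → u ∈ S) ∧ t.label v = some a := by
  simp only [restrict]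
  split_ifs with h <;> simp_all

theorem restrict_label_of_forall (h : ∀ u, u <+: v → u ∈ S) :
    (t.restrict S).label v = t.label v := by
  simp only [restrict, if_pos h]

theorem restrict_eq_self (h : ∀ v, t.label v ≠ none → v ∈ S) : t.restrict S = t := by
  have hlabel : (t.restrict S).label = t.label := by
    funext v
    by_cases hv : t.label v = none
    · rw [hv, Option.eq_none_iff_forall_ne_some]
      intro a ha
      rw [(restrict_label_eq_some.mp ha).2] at hv
      exact Option.some_ne_none a hv
    · exact restrict_label_of_forall fun u hu => h u (t.label_ne_none_of_prefix hu hv)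
  cases t
  simp only [restrict, mk.injEq] at hlabel ⊢
  exact hlabel

theorem restrict_insert_label_of_ne (hS : ∀ u w, u <+: w → w ∈ S → u ∈ S) (hvS : v ∉ S)
    {w : List ℕ} {b : α} (hw : (t.restrict (insert v S)).label w = some b) (hwv : w ≠ v) :
    (t.restrict S).label w = some b := by
  obtain ⟨hall, hwb⟩ := restrict_label_eq_some.mp hw
  have hwS : w ∈ S := (hall w w.prefix_refl).resolve_left hwv
  refine restrict_label_eq_some.mpr ⟨fun u hu => (hall u hu).resolve_left ?_, hwb⟩
  rintro rfl
  exact hvS (hS u w hu hwS)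

theorem isLeaf_restrict_insert (hS : ∀ u w, u <+: w → w ∈ S → u ∈ S) (hvS : v ∉ S)
    (hv : t.label v ≠ none) (hpre : ∀ u, u <+: v → u ≠ v → u ∈ S) :
    (t.restrict (insert v S)).IsLeaf v := by
  refine ⟨?_, fun i => Option.eq_none_iff_forall_ne_some.mpr fun b hb => ?_⟩
  · rwa [restrict_label_of_forall fun u hu => ?_]
    by_cases huv : u = v
    · exact .inl huv
    · exact .inr (hpre u hu huv)
  · have hchild := (restrict_label_eq_some.mp hb).1 _ (v ++ [i]).prefix_refl
    rcases hchild with h | h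
    · simp at h
    · exact hvS (hS v _ (List.prefix_append v [i]) h)

end RTree

/-- `ρ` with `ρ (v ++ [i])` replaced by `qs[i]` for `i < qs.length`. -/
def setChildren {Q : Type} (ρ : List ℕ → Q) (v : List ℕ) (qs : List Q) : List ℕ → Q :=
  fun w => if v <+: w ∧ w.length = v.length + 1 then qs.getD (w.drop v.length).headI (ρ w) else ρ w

section setChildren

variable {Q : Type} {ρ : List ℕ → Q} {v w : List ℕ} {qs : List Q}

theorem setChildren_append_singleton (i : ℕ) :
    setChildren ρ v qs (v ++ [i]) = qs.getD i (ρ (v ++ [i])) := by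
  simp [setChildren]

theorem setChildren_of_ne (h : ∀ i, w ≠ v ++ [i]) : setChildren ρ v qs w = ρ w := by
  rw [setChildren, if_neg]
  rintro ⟨⟨u, rfl⟩, hlen⟩
  obtain ⟨i, rfl⟩ := List.length_eq_one_iff.mp (by simpa using hlen)
  exact h i rfl

theorem setChildren_of_prefix (h : w <+: v) : setChildren ρ v qs w = ρ w :=
  setChildren_of_ne fun i hi => by simpa [hi] using h.length_le

end setChildren

namespace TDTA

variable {Q α : Type} {rank : α → ℕ} {A : TDTA Q α rank} {a : α} {v : List ℕ}

theorem rhsOf_congr {π π' : List ℕ → Q} (h : ∀ i < rank a, π (v ++ [i]) = π' (v ++ [i])) :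
    A.rhsOf a π v = A.rhsOf a π' v := by
  unfold rhsOf
  split
  · rfl
  · exact List.map_congr_left fun i hi => h i (List.mem_range.mp hi)

theorem getD_rhsOf {π : List ℕ → Q} {i : ℕ} (hi : i < rank a) (d : Q) :
    (A.rhsOf a π v).getD i d = π (v ++ [i]) := by
  rw [rhsOf, if_neg (by omega), List.getD_eq_getElem _ _ (by simpa), List.getElem_map,
    List.getElem_range]

theorem rhsOf_setChildren {p : Q} {ps : List Q} (h : (p, a, ps) ∈ A.delta) (ρ : List ℕ → Q) :
    A.rhsOf a (setChildren ρ v ps) v = ps := by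
  unfold rhsOf
  split_ifs with h0
  · exact ((A.rank_ok _ h).1 h0).symm
  · have hlen : ps.length = rank a := (A.rank_ok _ h).2 (Nat.pos_of_ne_zero h0)
    refine List.ext_getElem (by simp [hlen]) fun i hi _ => ?_
    simp only [List.getElem_map, List.getElem_range, setChildren_append_singleton]
    exact List.getD_eq_getElem _ _ (by simpa [hlen] using hi)

theorem rhsOf_quotAut (s : Setoid Q) (π : List ℕ → Q) :
    (A.quotAut s).rhsOf a (fun w => Quotient.mk s (π w)) v =
      (A.rhsOf a π v).map (Quotient.mk s) := by
  unfold rhsOf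
  split_ifs
  · rfl
  · simp [List.map_map, Function.comp_def]

theorem IsRun.quotAut (s : Setoid Q) {t : RTree α rank} {π : List ℕ → Q} (h : A.IsRun t π) :
    (A.quotAut s).IsRun t (fun w => Quotient.mk s (π w)) := fun v a hv => by
  rw [rhsOf_quotAut]
  exact ⟨_, _, _, h v a hv, rfl⟩

theorem exists_rule_of_isRun_quotAut {s : Setoid Q} {t : RTree α rank} {F : List ℕ → Quotient s}
    (hF : (A.quotAut s).IsRun t F) (hv : t.label v = some a) :
    ∃ p ps, (p, a, ps) ∈ A.delta ∧ F v = Quotient.mk s p ∧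
      ∀ i < rank a, ∀ d, Quotient.mk s (ps.getD i d) = F (v ++ [i]) := by
  obtain ⟨p, a', ps, hp, heq⟩ := hF v a hv
  simp only [Prod.mk.injEq] at heq
  obtain ⟨hFv, rfl, hrhs⟩ := heq
  refine ⟨p, ps, hp, hFv, fun i hi d => ?_⟩
  have hchild := congrArg (List.getD · i (Quotient.mk s d)) hrhs
  rwa [getD_rhsOf hi, List.getD_map, eq_comm] at hchild

theorem exists_rule_of_upIncl {R : Q → Q → Prop} {q r : Q} {qs : List Q}
    (h : (q, a, qs) ∈ A.delta) (hqr : A.upIncl R q r) : ∃ rs, (r, a, rs) ∈ A.delta := by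
  have hrun : A.IsRun (RTree.single a) (setChildren (fun _ => q) [] qs) := fun w b hw => by
    obtain ⟨rfl, rfl⟩ : w = [] ∧ a = b := by simpa [RTree.single] using hw
    rw [rhsOf_setChildren h]
    exact h
  obtain ⟨π, hπ, hπr, -⟩ := hqr.2 _ [] (RTree.isLeaf_single a) _ hrun rfl
  exact ⟨_, hπr ▸ hπ [] a (by simp [RTree.single])⟩

theorem isRun_setChildren {T : RTree α rank} {ρ : List ℕ → Q} {qs : List Q}
    (hleaf : T.IsLeaf v) (hva : T.label v = some a)
    (hρ : ∀ w b, T.label w = some b → w ≠ v → (ρ w, b, A.rhsOf b ρ w) ∈ A.delta)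
    (hqs : (ρ v, a, qs) ∈ A.delta) : A.IsRun T (setChildren ρ v qs) := by
  intro w b hw
  by_cases hwv : w = v
  · subst hwv
    obtain rfl : a = b := Option.some_injective _ (hva.symm.trans hw)
    rw [setChildren_of_prefix w.prefix_refl, rhsOf_setChildren hqs]
    exact hqs
  · have hnot_child : ∀ i, w ≠ v ++ [i] := fun i h => by simp [h, hleaf.2 i] at hw
    rw [setChildren_of_ne hnot_child,
      rhsOf_congr fun x _ => setChildren_of_ne fun i h => hwv (List.append_inj_left' h rfl)]
    exact hρ w b hw hwv

theorem isRun_splice {T : RTree α rank} {π π' : List ℕ → Q} {ps : List Q}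
    (hleaf : T.IsLeaf v) (hva : T.label v = some a) (hps : (π' v, a, ps) ∈ A.delta)
    (hπ : ∀ w b, T.label w = some b → ¬w <+: v → (π w, b, A.rhsOf b π w) ∈ A.delta)
    (hπ' : A.IsRun T π')
    (hagree : ∀ w x, w <+: v → w ≠ v → T.inRunDom (w ++ [x]) → ¬(w ++ [x]) <+: v →
      π (w ++ [x]) = π' (w ++ [x])) :
    A.IsRun T (setChildren (fun w => if w <+: v then π' w else π w) v ps) := by
  intro w b hw
  by_cases hwv : w = v
  · subst hwv
    obtain rfl : a = b := Option.some_injective _ (hva.symm.trans hw)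
    rw [setChildren_of_prefix w.prefix_refl, rhsOf_setChildren hps, if_pos w.prefix_refl]
    exact hps
  have hnot_child : ∀ i, w ≠ v ++ [i] := fun i h => by simp [h, hleaf.2 i] at hw
  rw [setChildren_of_ne hnot_child,
    rhsOf_congr fun x _ => setChildren_of_ne fun i h => hwv (List.append_inj_left' h rfl)]
  by_cases hwp : w <+: v
  · rw [if_pos hwp, rhsOf_congr (π' := π') fun x hx => ?_]
    · exact hπ' w b hw
    · by_cases hxp : (w ++ [x]) <+: v
      · exact if_pos hxp
      · rw [if_neg hxp]
        exact hagree w x hwp hwv (.inr ⟨w, x, b, rfl, hw, hx⟩) hxp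
  · rw [if_neg hwp,
      rhsOf_congr (π' := π) fun x _ => if_neg fun h => hwp ((List.prefix_append w [x]).trans h)]
    exact hπ w b hw hwp

def IsPartialLift (A : TDTA Q α rank) (s : Setoid Q) (t : RTree α rank) (F : List ℕ → Quotient s)
    (S : Set (List ℕ)) (ρ : List ℕ → Q) : Prop :=
  A.IsRun (t.restrict S) ρ ∧ ρ [] ∈ A.init ∧
    ∀ w, t.label w ≠ none → w ∉ S → (∀ u, u <+: w → u ≠ w → u ∈ S) → Quotient.mk s (ρ w) = F w

variable {s : Setoid Q} {t : RTree α rank} {F : List ℕ → Quotient s} {S : Set (List ℕ)}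
  {ρ : List ℕ → Q}

theorem isPartialLift_empty {q : Q} (hq : q ∈ A.init) (hF : F [] = Quotient.mk s q) :
    A.IsPartialLift s t F ∅ fun _ => q := by
  refine ⟨fun w b hw => ?_, hq, fun w _ _ hpre => ?_⟩
  · exact absurd ((RTree.restrict_label_eq_some.mp hw).1 w w.prefix_refl) (Set.notMem_empty w)
  · obtain rfl : w = [] := by
      by_contra hw
      exact hpre [] w.nil_prefix (Ne.symm hw)
    exact hF.symm

theorem IsPartialLift.exists_insert (hs : ∀ q r, s.r q r → A.upIncl Eq q r ∧ A.upIncl Eq r q)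
    (hF : (A.quotAut s).IsRun t F) (hS : ∀ u w, u <+: w → w ∈ S → u ∈ S)
    (hv : t.label v ≠ none) (hvS : v ∉ S) (hpre : ∀ u, u <+: v → u ≠ v → u ∈ S)
    (hρ : A.IsPartialLift s t F S ρ) : ∃ ρ', A.IsPartialLift s t F (insert v S) ρ' := by
  obtain ⟨hrun, hinit, hfront⟩ := hρ
  obtain ⟨a, ha⟩ := Option.ne_none_iff_exists'.mp hv
  obtain ⟨p, ps, hp, hFv, hFchild⟩ := exists_rule_of_isRun_quotAut hF ha
  obtain ⟨hρp, hpρ⟩ := hs _ _ (Quotient.exact ((hfront v hv hvS hpre).trans hFv))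
  obtain ⟨qs, hqs⟩ := exists_rule_of_upIncl hp hpρ
  have hleaf := RTree.isLeaf_restrict_insert hS hvS hv hpre
  have hTv : (t.restrict (insert v S)).label v = some a := by
    obtain ⟨b, hb⟩ := Option.ne_none_iff_exists'.mp hleaf.1
    rwa [(RTree.restrict_label_eq_some.mp hb).2.symm.trans ha] at hb
  have hoff : ∀ w b, (t.restrict (insert v S)).label w = some b → w ≠ v →
      (ρ w, b, A.rhsOf b ρ w) ∈ A.delta := fun w b hw hwv =>
    hrun w b (RTree.restrict_insert_label_of_ne hS hvS hw hwv)
  obtain ⟨π, hπ, hπv, hπinit, hπoff⟩ := hρp.2 _ v hleaf _ (isRun_setChildren hleaf hTv hoff hqs)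
    (setChildren_of_prefix v.prefix_refl)
  refine ⟨_, isRun_splice hleaf hTv (hπv ▸ hp)
    (fun w b hw hwv => hoff w b hw fun h => hwv (h ▸ w.prefix_refl)) hπ ?_, ?_, ?_⟩
  · intro w x hwv hne hdom hnp
    rw [← hπoff w x hwv hne hdom hnp,
      setChildren_of_ne fun i h => hne (List.append_inj_left' h rfl)]
  · rw [setChildren_of_prefix v.nil_prefix, if_pos v.nil_prefix]
    exact hπinit [] v.nil_prefix (by rwa [setChildren_of_prefix v.nil_prefix])
  · intro w hw hwS hwpre
    obtain ⟨hwv, hwS⟩ := not_or.mp hwS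
    by_cases hvw : v <+: w
    · -- `w` is a child of `v`: otherwise some child of `v` would lie in `S`, and then so would `v`
      obtain ⟨i, rfl⟩ : ∃ i, w = v ++ [i] := by
        obtain ⟨_ | ⟨i, u⟩, rfl⟩ := hvw
        · simp at hwv
        refine ⟨i, by_contra fun hne => hvS (hS v (v ++ [i]) (List.prefix_append _ _) ?_)⟩
        refine ((hwpre _ (by simp) (Ne.symm hne)).resolve_left ?_)
        simp
      obtain ⟨b, hb, hi⟩ := t.prefixClosed v i hw
      obtain rfl : a = b := Option.some_injective _ (ha.symm.trans hb)
      rw [setChildren_append_singleton]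
      exact hFchild i hi _
    · have hwv' : ¬w <+: v := fun h => hwS (hpre w h hwv)
      rw [setChildren_of_ne fun i h => hvw (by simp [h]), if_neg hwv']
      exact hfront w hw hwS fun u hu hne => (hwpre u hu hne).resolve_left fun h => hvw (h ▸ hu)

theorem IsPartialLift.exists_run (hs : ∀ q r, s.r q r → A.upIncl Eq q r ∧ A.upIncl Eq r q)
    (hF : (A.quotAut s).IsRun t F) (hS : ∀ u w, u <+: w → w ∈ S → u ∈ S)
    (hρ : A.IsPartialLift s t F S ρ) : ∃ π, A.IsRun t π ∧ π [] ∈ A.init := by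
  have hfin : ({v | t.label v ≠ none} \ S).Finite := t.finite.subset Set.sdiff_subset
  obtain ⟨n, hn⟩ : ∃ n, ({v | t.label v ≠ none} \ S).ncard = n := ⟨_, rfl⟩
  induction n generalizing S ρ with
  | zero =>
    have hsub : ∀ v, t.label v ≠ none → v ∈ S := fun v hv => by
      by_contra hvS
      exact ((Set.ncard_eq_zero hfin).mp hn).subset ⟨hv, hvS⟩
    exact ⟨ρ, RTree.restrict_eq_self hsub ▸ hρ.1, hρ.2.1⟩
  | succ n ih =>
    obtain ⟨v, ⟨hv, hvS⟩, hmin⟩ :=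
      Set.exists_min_image _ List.length hfin (Set.nonempty_of_ncard_ne_zero (by omega))
    have hpre : ∀ u, u <+: v → u ≠ v → u ∈ S := fun u hu hne => by
      by_contra huS
      exact hne (hu.eq_of_length (le_antisymm hu.length_le
        (hmin u ⟨t.label_ne_none_of_prefix hu hv, huS⟩)))
    obtain ⟨ρ', hρ'⟩ := hρ.exists_insert hs hF hS hv hvS hpre
    refine ih (fun u w huw hw => ?_) hρ' (t.finite.subset Set.sdiff_subset) ?_
    · rcases hw with rfl | hw
      · by_cases huv : u = w
        · exact .inl huv
        · exact .inr (hpre u huw huv)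
      · exact .inr (hS u w huw hw)
    · have hdiff : {v | t.label v ≠ none} \ insert v S = ({v | t.label v ≠ none} \ S) \ {v} := by
        ext w
        simp only [Set.mem_sdiff, Set.mem_insert_iff, Set.mem_singleton_iff]
        tauto
      rw [hdiff, Set.ncard_sdiff_singleton_of_mem (show v ∈ _ \ S from ⟨hv, hvS⟩), hn,
        Nat.add_sub_cancel]

end TDTA

theorem statement_9_general {Q α : Type} {rank : α → ℕ}
    (A : TDTA Q α rank) (s : Setoid Q)
    (hs : ∀ q r, s.r q r ↔ (A.upIncl Eq q r ∧ A.upIncl Eq r q)) :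
    (A.quotAut s).lang = A.lang := by
  ext t
  constructor
  · rintro ⟨_, ⟨q, hq, rfl⟩, htc, F, hF, hFq⟩
    obtain ⟨π, hπ, hπinit⟩ := (TDTA.isPartialLift_empty hq hFq).exists_run
      (fun q r => (hs q r).1) hF (fun _ _ _ h => h)
    exact ⟨_, hπinit, htc, π, hπ, rfl⟩
  · rintro ⟨q, hq, htc, π, hπ, rfl⟩
    exact ⟨_, ⟨_, hq, rfl⟩, htc, _, hπ.quotAut s, rfl⟩

/-- The equivalence `≡up(id) = ⊆up(id) ∩ ⊇up(id)` is good for quotienting. -/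
theorem statement_9 {Q α : Type} [Fintype Q] [Fintype α] {rank : α → ℕ}
    (A : TDTA Q α rank) (s : Setoid Q)
    (hs : ∀ q r, s.r q r ↔ (A.upIncl Eq q r ∧ A.upIncl Eq r q)) :
    (A.quotAut s).lang = A.lang :=
  statement_9_general A s hs
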